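/- arXiv:1905.11092 — 5 statements merged into one kernel-verified Lean document; each statement's English description precedes it below -/
import Mathlib

section
/- Let δ ∈ (0,1), let d, q, N be positive integers with d · 2^{−q} ≤ 1 − δ, let Φ : {0,1}^d → {0,1}, and suppose Φ(x) = 1 for some x ∈ {0,1}^d. Define Φ' : ({0,1}^d)^q × {0,1}^N → {0,1} by Φ'(u^{(1)},…,u^{(q)}, v) = Φ(⋀_{j=1}^q u^{(j)}) ∨ (⋀_{i=1}^N v_i), where ⋀_{j=1}^q u^{(j)} is the componentwise conjunction, and let x' be the all-ones input. Let S = {i ∈ [d] : x_i = 1} and S' = S × [q] (viewed as a subset of the U-coordinates). Then the set S' is δ-relevant for Φ' and x': the conditional probability that Φ'(U, v) = 1, given that u_i^{(j)} = 1 for all (i,j) ∈ S', is at least δ, where (U, v) is uniformly random on ({0,1}^d)^q × {0,1}^N. -/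
/-!
Conditioned on the rows `i ∈ S` of `U` being all ones, the other `m = d - |S|` rows of `U`
and the vector `v` are uniform. If each of those `m` rows contains a zero, then
`⋀ⱼ u⁽ʲ⁾ = x` and `Φ'(U, v) = Φ x = 1`. This happens with probability
`(1 - 2^{-q})^m ≥ 1 - d 2^{-q} ≥ δ` by Bernoulli's inequality.
-/

open Finset

section Counting

variable {ι κ : Type*} [Fintype ι] [DecidableEq ι] [Fintype κ] [DecidableEq κ]

omit [DecidableEq κ] in
theorem card_filter_forall_apply {α : ι → Type*} [∀ i, Fintype (α i)]
    (p : ∀ i, α i → Prop) [∀ i, DecidablePred (p i)]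
    [DecidablePred fun u : ∀ i, α i => ∀ i, p i (u i)] :
    #{u : ∀ i, α i | ∀ i, p i (u i)} = ∏ i, #{a : α i | p i a} := by
  rw [← Fintype.card_piFinset]
  congr 1
  ext u
  simp

omit [DecidableEq ι] [Fintype κ] [DecidableEq κ] in
theorem prod_bool_ite_one (b : ι → Bool) (n : ℕ) :
    ∏ i, (if b i then 1 else n) = n ^ #{i | b i = false} := by
  rw [prod_ite, prod_const_one, one_mul, prod_const]
  simp

omit [Fintype ι] [DecidableEq ι] in
theorem card_filter_forall_eq_true_iff (b : Bool) :
    #{g : κ → Bool | (∀ j, g j = true) ↔ b = true}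
      = if b then 1 else 2 ^ Fintype.card κ - 1 := by
  have hall : ∀ g : κ → Bool, (∀ j, g j = true) ↔ g = fun _ => true :=
    fun g => funext_iff.symm
  cases b <;> simp [hall, filter_eq', filter_ne']

omit [Fintype ι] [DecidableEq ι] in
theorem card_filter_forall_eq_true_of (b : Bool) :
    #{g : κ → Bool | b = true → ∀ j, g j = true} = if b then 1 else 2 ^ Fintype.card κ := by
  have hall : ∀ g : κ → Bool, (∀ j, g j = true) ↔ g = fun _ => true :=
    fun g => funext_iff.symm
  cases b <;> simp [hall, filter_eq']

theorem card_filter_rows_forall_eq_true_iff (x : ι → Bool)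
    [DecidablePred fun u : ι → κ → Bool => ∀ i, (∀ j, u i j = true) ↔ x i = true] :
    #{u : ι → κ → Bool | ∀ i, (∀ j, u i j = true) ↔ x i = true}
      = (2 ^ Fintype.card κ - 1) ^ #{i | x i = false} := by
  rw [card_filter_forall_apply (fun i (g : κ → Bool) => (∀ j, g j = true) ↔ x i = true)]
  simp_rw [card_filter_forall_eq_true_iff, prod_bool_ite_one]

theorem card_filter_rows_forall_eq_true_of (x : ι → Bool)
    [DecidablePred fun u : ι → κ → Bool => ∀ i, x i = true → ∀ j, u i j = true] :
    #{u : ι → κ → Bool | ∀ i, x i = true → ∀ j, u i j = true}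
      = (2 ^ Fintype.card κ) ^ #{i | x i = false} := by
  rw [card_filter_forall_apply (fun i (g : κ → Bool) => x i = true → ∀ j, g j = true)]
  simp_rw [card_filter_forall_eq_true_of, prod_bool_ite_one]

end Counting

theorem le_one_sub_pow_of_mul_le {δ ε : ℝ} {m d : ℕ} (hε0 : 0 ≤ ε) (hε2 : ε ≤ 2)
    (hmd : m ≤ d) (h : d * ε ≤ 1 - δ) : δ ≤ (1 - ε) ^ m := by
  have hbernoulli : 1 + m * (-ε) ≤ (1 + -ε) ^ m := one_add_mul_le_pow (by linarith) m
  have : (m : ℝ) * ε ≤ d * ε := by gcongr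
  rw [← sub_eq_add_neg] at hbernoulli
  linarith

theorem le_div_of_pow_two_pow_sub_one_le {δ : ℝ} {d q m N a c : ℕ} (hmd : m ≤ d)
    (hgap : (d : ℝ) * ((2 : ℝ) ^ q)⁻¹ ≤ 1 - δ) (ha : (2 ^ q - 1) ^ m * 2 ^ N ≤ a)
    (hc : c = (2 ^ q) ^ m * 2 ^ N) : δ ≤ (a : ℝ) / c := by
  have h2q : (1 : ℝ) ≤ 2 ^ q := one_le_pow₀ one_le_two
  have ha' : ((2 ^ q - 1) ^ m * 2 ^ N : ℝ) ≤ a := by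
    have := (Nat.cast_le (α := ℝ)).2 ha
    push_cast [Nat.cast_sub Nat.one_le_two_pow] at this
    exact this
  calc δ ≤ (1 - ((2 : ℝ) ^ q)⁻¹) ^ m :=
        le_one_sub_pow_of_mul_le (by positivity) (by linarith [inv_le_one_of_one_le₀ h2q]) hmd
          hgap
    _ = ((2 ^ q - 1) ^ m * 2 ^ N : ℝ) / ((2 ^ q) ^ m * 2 ^ N) := by
        rw [mul_div_mul_right _ _ (by positivity), ← div_pow, sub_div, div_self (by positivity),
          one_div]
    _ ≤ a / c := by
        rw [hc]
        push_cast
        gcongr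

theorem sat_gives_relevant_set_general (δ : ℝ)
    (d q N : ℕ)
    (hgap : (d : ℝ) * ((2 : ℝ) ^ q)⁻¹ ≤ 1 - δ)
    (Φ : (Fin d → Bool) → Bool) (x : Fin d → Bool) (hx : Φ x = true) :
    let Φ' : (Fin d → Fin q → Bool) × (Fin N → Bool) → Bool := fun w =>
      Φ (fun i => decide (∀ j : Fin q, w.1 i j = true)) || decide (∀ i : Fin N, w.2 i = true)
    let S : Finset (Fin d) := Finset.univ.filter (fun i => x i = true)
    let S' : Finset (Fin d × Fin q) := S ×ˢ Finset.univ
    δ ≤ ((Finset.univ.filter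
          (fun w : (Fin d → Fin q → Bool) × (Fin N → Bool) =>
            Φ' w = true ∧ ∀ c ∈ S', w.1 c.1 c.2 = true)).card : ℝ) /
        ((Finset.univ.filter
          (fun w : (Fin d → Fin q → Bool) × (Fin N → Bool) =>
            ∀ c ∈ S', w.1 c.1 c.2 = true)).card : ℝ) := by
  intro Φ' S S'
  set C : Finset ((Fin d → Fin q → Bool) × (Fin N → Bool)) :=
    {w | ∀ c ∈ S', w.1 c.1 c.2 = true}
  set A : Finset ((Fin d → Fin q → Bool) × (Fin N → Bool)) :=
    {w | Φ' w = true ∧ ∀ c ∈ S', w.1 c.1 c.2 = true}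
  have hcond : C =
      ({u | ∀ i, x i = true → ∀ j, u i j = true} : Finset (Fin d → Fin q → Bool))
        ×ˢ univ := by
    ext w
    simp [C, S', S, imp_forall_iff]
  have hsat :
      ({u | ∀ i, (∀ j, u i j = true) ↔ x i = true} : Finset (Fin d → Fin q → Bool))
        ×ˢ univ ⊆ A := by
    rintro ⟨u, v⟩ huv
    simp only [mem_product, mem_filter, mem_univ, true_and, and_true] at huv
    have hconj : (fun i => decide (∀ j, u i j = true)) = x :=
      funext fun i => Bool.eq_iff_iff.2 (by simpa using huv i)
    refine mem_filter.2 ⟨mem_univ _, by simp [Φ', hconj, hx], ?_⟩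
    simpa [S', S] using fun i j hi => (huv i).2 hi j
  have hden : #C = (2 ^ q) ^ #{i | x i = false} * 2 ^ N := by
    rw [hcond, card_product, card_filter_rows_forall_eq_true_of]
    simp
  have hnum : (2 ^ q - 1) ^ #{i | x i = false} * 2 ^ N ≤ #A := by
    refine le_of_eq_of_le ?_ (card_le_card hsat)
    rw [card_product, card_filter_rows_forall_eq_true_iff]
    simp
  exact le_div_of_pow_two_pow_sub_one_le (card_le_univ _ |>.trans_eq (Fintype.card_fin d))
    hgap hnum hden

/-- Let `δ ∈ (0,1)`, `d, q, N` positive with `d·2^{−q} ≤ 1 − δ`, and let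
`Φ` be satisfiable, say `Φ(x) = 1`.  Define
`Φ'(u⁽¹⁾,…,u⁽ᑫ⁾,v) = Φ(⋀ⱼ u⁽ʲ⁾) ∨ (⋀ᵢ vᵢ)` and let `x'` be the all-ones input.
With `S = {i : xᵢ = 1}` and `S' = S × [q]`, the set `S'` is `δ`-relevant for `Φ'` and
`x'`: the conditional probability (for uniformly random `(U, v)`) that `Φ'(U, v) = 1`,
given `uᵢ⁽ʲ⁾ = 1` for all `(i,j) ∈ S'`, is at least `δ`. -/
theorem sat_gives_relevant_set (δ : ℝ) (hδ0 : 0 < δ) (hδ1 : δ < 1)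
    (d q N : ℕ) (hd : 0 < d) (hq : 0 < q) (hN : 0 < N)
    (hgap : (d : ℝ) * ((2 : ℝ) ^ q)⁻¹ ≤ 1 - δ)
    (Φ : (Fin d → Bool) → Bool) (x : Fin d → Bool) (hx : Φ x = true) :
    let Φ' : (Fin d → Fin q → Bool) × (Fin N → Bool) → Bool := fun w =>
      Φ (fun i => decide (∀ j : Fin q, w.1 i j = true)) || decide (∀ i : Fin N, w.2 i = true)
    let S : Finset (Fin d) := Finset.univ.filter (fun i => x i = true)
    let S' : Finset (Fin d × Fin q) := S ×ˢ Finset.univ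
    δ ≤ ((Finset.univ.filter
          (fun w : (Fin d → Fin q → Bool) × (Fin N → Bool) =>
            Φ' w = true ∧ ∀ c ∈ S', w.1 c.1 c.2 = true)).card : ℝ) /
        ((Finset.univ.filter
          (fun w : (Fin d → Fin q → Bool) × (Fin N → Bool) =>
            ∀ c ∈ S', w.1 c.1 c.2 = true)).card : ℝ) :=
  sat_gives_relevant_set_general δ d q N hgap Φ x hx
end

section
/- Let δ ∈ (0,1), let d, q, m', p be positive integers with 2^{−p} < δ, let N = m' + p, and let Φ : {0,1}^d → {0,1} be unsatisfiable (Φ(z) = 0 for all z ∈ {0,1}^d). Define Φ' : ({0,1}^d)^q × {0,1}^N → {0,1} by Φ'(u^{(1)},…,u^{(q)}, v) = Φ(⋀_{j=1}^q u^{(j)}) ∨ (⋀_{i=1}^N v_i), and let x' be the all-ones input. Then for every subset T of the dq + N coordinates with |T| ≤ m', the conditional probability that Φ'(y) = 1 given y_T = 1 (with y uniformly random) is at most 2^{−(m' + p − |T|)}, which is strictly less than δ; in particular no such T is δ-relevant for Φ' and x'. -/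
/-! Since `Φ` is unsatisfiable, `Φ'` is true exactly when all `v`-coordinates are. Conditioned on
`y_T = 1`, the event `Φ' = 1` is therefore the event that the coordinates of `T ∪ v` outside `T` are
all `1`, which has probability `2^{-|(T ∪ v) \ T|} ≤ 2^{-(N - |T|)} ≤ 2^{-p} < δ`. -/

open Finset

section

variable {α : Type*} [Fintype α] [DecidableEq α]

theorem card_filter_forall_mem_eq_true (S : Finset α) :
    #{f : α → Bool | ∀ a ∈ S, f a = true} = 2 ^ (Fintype.card α - #S) := by
  have hpi : ({f : α → Bool | ∀ a ∈ S, f a = true} : Finset _) =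
      Fintype.piFinset fun a => if a ∈ S then {true} else univ := by
    ext f
    simp only [mem_filter, mem_univ, true_and, Fintype.mem_piFinset]
    refine ⟨fun h a => ?_, fun h a ha => by simpa [ha] using h a⟩
    split_ifs with ha <;> simp [h a, ha]
  simp only [hpi, Fintype.card_piFinset, apply_ite card, card_singleton, card_univ,
    Fintype.card_bool, prod_ite, prod_const_one, one_mul, prod_const]
  rw [← card_compl, compl_eq_univ_sdiff, filter_not, filter_mem_eq_inter, univ_inter]

theorem card_filter_forall_mem_eq_true_div_of_subset {S S' : Finset α} (h : S ⊆ S') :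
    (#{f : α → Bool | ∀ a ∈ S', f a = true} : ℝ) / #{f : α → Bool | ∀ a ∈ S, f a = true}
      = (2 ^ (#S' - #S))⁻¹ := by
  have hS' : #S' ≤ Fintype.card α := card_le_univ S'
  have hSS' : #S ≤ #S' := card_le_card h
  rw [card_filter_forall_mem_eq_true, card_filter_forall_mem_eq_true,
    show Fintype.card α - #S = (#S' - #S) + (Fintype.card α - #S') by omega]
  push_cast
  rw [pow_add]
  field_simp

theorem unsat_no_relevant_set_general (δ : ℝ)
    (d q m' p : ℕ)
    (hpδ : ((2 : ℝ) ^ p)⁻¹ < δ)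
    (N : ℕ) (hN : N = m' + p)
    (Φ : (Fin d → Bool) → Bool) (hΦ : ∀ z : Fin d → Bool, Φ z = false) :
    let Φ' : (Fin d → Fin q → Bool) × (Fin N → Bool) → Bool := fun w =>
      Φ (fun i => decide (∀ j : Fin q, w.1 i j = true)) || decide (∀ i : Fin N, w.2 i = true)
    -- the value of the coordinate `c` of a configuration `w`
    let coord : (Fin d → Fin q → Bool) × (Fin N → Bool) → (Fin d × Fin q) ⊕ Fin N → Bool :=
      fun w => Sum.elim (fun c => w.1 c.1 c.2) w.2
    ∀ T : Finset ((Fin d × Fin q) ⊕ Fin N), T.card ≤ m' →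
      ((Finset.univ.filter
          (fun w : (Fin d → Fin q → Bool) × (Fin N → Bool) =>
            Φ' w = true ∧ ∀ c ∈ T, coord w c = true)).card : ℝ) /
        ((Finset.univ.filter
          (fun w : (Fin d → Fin q → Bool) × (Fin N → Bool) =>
            ∀ c ∈ T, coord w c = true)).card : ℝ)
      ≤ ((2 : ℝ) ^ (m' + p - T.card))⁻¹
      ∧ ((2 : ℝ) ^ (m' + p - T.card))⁻¹ < δ := by
  intro Φ' coord T hT
  let e : (Fin d → Fin q → Bool) × (Fin N → Bool) ≃ ((Fin d × Fin q ⊕ Fin N) → Bool) :=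
    { toFun := coord
      invFun := fun f => (fun i j => f (.inl (i, j)), f ∘ .inr)
      left_inv := fun _ => rfl
      right_inv := fun f => funext (by rintro (_ | _) <;> rfl) }
  let V := univ.map (Function.Embedding.inr : Fin N ↪ Fin d × Fin q ⊕ Fin N)
  have hV : #V = N := by simp [V]
  have hΦ' (w) : (Φ' w = true ∧ ∀ c ∈ T, coord w c = true) ↔ ∀ c ∈ T ∪ V, coord w c = true := by
    have hv : Φ' w = true ↔ ∀ c ∈ V, coord w c = true := by simp [Φ', hΦ, V, coord]
    rw [hv, forall_mem_union, and_comm]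
  have hratio : (#{w | Φ' w = true ∧ ∀ c ∈ T, coord w c = true} : ℝ) /
      #{w | ∀ c ∈ T, coord w c = true} = (2 ^ (#(T ∪ V) - #T))⁻¹ := by
    rw [← card_filter_forall_mem_eq_true_div_of_subset subset_union_left]
    congr 2
    · exact card_equiv e fun w => by simp only [mem_filter, mem_univ, true_and, hΦ']; rfl
    · exact card_equiv e fun w => by simp only [mem_filter, mem_univ, true_and]; rfl
  have hexp : m' + p - #T ≤ #(T ∪ V) - #T := by
    have := card_le_card (subset_union_right (s₁ := T) (s₂ := V))
    omega
  refine ⟨hratio ▸ inv_anti₀ (by positivity) (pow_le_pow_right₀ one_le_two hexp), ?_⟩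
  exact (inv_anti₀ (by positivity) (pow_le_pow_right₀ one_le_two (by omega))).trans_lt hpδ

/-- Let `δ ∈ (0,1)`, `d, q, m', p` positive with `2^{−p} < δ`, `N = m' + p`,
and let `Φ` be unsatisfiable.  Define `Φ'(U, v) = Φ(⋀ⱼ u⁽ʲ⁾) ∨ (⋀ᵢ vᵢ)` on
`({0,1}^d)^q × {0,1}^N` and let `x'` be the all-ones input.  Then for every subset `T`
of the `dq + N` coordinates with `|T| ≤ m'`, the conditional probability that
`Φ'(y) = 1` given `y_T = 1` (with `y` uniformly random) is at most
`2^{−(m' + p − |T|)} < δ`; in particular no such `T` is `δ`-relevant for `Φ'` and `x'`. -/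
theorem unsat_no_relevant_set (δ : ℝ) (hδ0 : 0 < δ) (hδ1 : δ < 1)
    (d q m' p : ℕ) (hd : 0 < d) (hq : 0 < q) (hm' : 0 < m') (hp : 0 < p)
    (hpδ : ((2 : ℝ) ^ p)⁻¹ < δ)
    (N : ℕ) (hN : N = m' + p)
    (Φ : (Fin d → Bool) → Bool) (hΦ : ∀ z : Fin d → Bool, Φ z = false) :
    let Φ' : (Fin d → Fin q → Bool) × (Fin N → Bool) → Bool := fun w =>
      Φ (fun i => decide (∀ j : Fin q, w.1 i j = true)) || decide (∀ i : Fin N, w.2 i = true)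
    -- the value of the coordinate `c` of a configuration `w`
    let coord : (Fin d → Fin q → Bool) × (Fin N → Bool) → (Fin d × Fin q) ⊕ Fin N → Bool :=
      fun w => Sum.elim (fun c => w.1 c.1 c.2) w.2
    ∀ T : Finset ((Fin d × Fin q) ⊕ Fin N), T.card ≤ m' →
      ((Finset.univ.filter
          (fun w : (Fin d → Fin q → Bool) × (Fin N → Bool) =>
            Φ' w = true ∧ ∀ c ∈ T, coord w c = true)).card : ℝ) /
        ((Finset.univ.filter
          (fun w : (Fin d → Fin q → Bool) × (Fin N → Bool) =>
            ∀ c ∈ T, coord w c = true)).card : ℝ)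
      ≤ ((2 : ℝ) ^ (m' + p - T.card))⁻¹
      ∧ ((2 : ℝ) ^ (m' + p - T.card))⁻¹ < δ :=
  unsat_no_relevant_set_general δ d q m' p hpδ N hN Φ hΦ
end
end

section
/- Let δ ∈ (0,1), let d be a positive integer, and let q, p, m' be positive integers satisfying d · 2^{−q} ≤ 1 − δ, 2^{−p} < δ, and m' ≥ dq. Let Φ : {0,1}^d → {0,1}, let N = m' + p, define Φ' : ({0,1}^d)^q × {0,1}^N → {0,1} by Φ'(u^{(1)},…,u^{(q)}, v) = Φ(⋀_{j=1}^q u^{(j)}) ∨ (⋀_{i=1}^N v_i), and let x' be the all-ones input. Then Φ is satisfiable if and only if there exists a subset T of the dq + N coordinates with |T| ≤ dq that is δ-relevant for Φ' and x'. Moreover, if Φ is unsatisfiable then no subset T with |T| ≤ m' is δ-relevant for Φ' and x'. -/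
/-!
If `Φ x = 1`, fix to one the coordinates `u⁽ʲ⁾ᵢ` (all `j`) with `xᵢ = 1`. Then `⋀ⱼ u⁽ʲ⁾ = x`, and
hence `Φ' = 1`, unless for some `i` with `xᵢ = 0` all `u⁽ʲ⁾ᵢ` are one; by a union bound this has
conditional probability at most `d · 2^{-q} ≤ 1 - δ`. If `Φ` is unsatisfiable, `Φ' = 1` forces all
`N` coordinates of `v` to be one; a set `T` with `|T| ≤ m'` fixes at most `m'` of them, so the
conditional probability is at most `2^{-(N - m')} = 2^{-p} < δ`.
-/

open Finset

section Subcube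

variable {I : Type*} [Fintype I] [DecidableEq I]

def subcube (S : Finset I) : Finset (I → Bool) := {f | ∀ i ∈ S, f i = true}

lemma card_subcube (S : Finset I) : #(subcube S) = 2 ^ (Fintype.card I - #S) := by
  have : subcube S = Fintype.piFinset fun i => if i ∈ S then {true} else univ := by
    ext f
    simp only [subcube, mem_filter, mem_univ, true_and, Fintype.mem_piFinset]
    refine forall_congr' fun i => ?_
    split_ifs with h <;> simp [h]
  simp [this, Fintype.card_piFinset, apply_ite card, prod_ite, filter_not, card_univ_sdiff]

lemma card_subcube_of_subset {S S' : Finset I} (h : S ⊆ S') :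
    #(subcube S) = 2 ^ (#S' - #S) * #(subcube S') := by
  rw [card_subcube, card_subcube, ← pow_add]
  have := card_le_card h
  have := card_le_univ S'
  congr 1
  omega

noncomputable def relevance (Ψ : (I → Bool) → Bool) (T : Finset I) : ℝ :=
  #{f ∈ subcube T | Ψ f} / #(subcube T)

lemma relevance_eq_of_equiv {α : Type*} [Fintype α] (e : α ≃ (I → Bool))
    (Ψ : (I → Bool) → Bool) (T : Finset I) :
    relevance Ψ T = (#{w | Ψ (e w) = true ∧ ∀ c ∈ T, e w c = true} : ℝ) /
      #{w | ∀ c ∈ T, e w c = true} := by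
  rw [relevance, subcube, filter_filter]
  congr 2 <;> exact_mod_cast card_equiv e.symm (by simp [and_comm])

end Subcube

section Padded

variable {d q N : ℕ}

/-- The function `Φ'` of the reduction, read on the cube of its `d q + N` coordinates. -/
def padded (Φ : (Fin d → Bool) → Bool) (f : (Fin d × Fin q) ⊕ Fin N → Bool) : Bool :=
  Φ (fun i => decide (∀ j, f (.inl (i, j)) = true)) || decide (∀ k, f (.inr k) = true)

lemma relevance_padded_le_of_unsat {Φ : (Fin d → Bool) → Bool} (hΦ : ∀ z, Φ z = false)
    {T : Finset ((Fin d × Fin q) ⊕ Fin N)} {m : ℕ} (hT : #T ≤ m) :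
    relevance (padded Φ) T ≤ ((2 : ℝ) ^ (N - m))⁻¹ := by
  set R : Finset ((Fin d × Fin q) ⊕ Fin N) := univ.map .inr
  have hfilter : {f ∈ subcube T | padded Φ f} = subcube (T ∪ R) := by
    ext f
    simp [subcube, padded, hΦ, R, or_imp, forall_and, and_comm]
  have hexp : N - m ≤ #(T ∪ R) - #T := by
    have := card_union_add_card_inter T R
    have := card_le_card (inter_subset_left : T ∩ R ⊆ T)
    have : #R = N := by simp [R]
    omega
  have hpos : (0 : ℝ) < #(subcube (T ∪ R)) := by
    rw [card_subcube]; positivity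
  rw [relevance, hfilter, card_subcube_of_subset (subset_union_left : T ⊆ T ∪ R), Nat.cast_mul,
    Nat.cast_pow, div_mul_cancel_right₀ hpos.ne', Nat.cast_ofNat]
  exact inv_anti₀ (by positivity) (pow_le_pow_right₀ one_le_two hexp)

def witness (q N : ℕ) (x : Fin d → Bool) : Finset ((Fin d × Fin q) ⊕ Fin N) :=
  ({c | x c.1} : Finset (Fin d × Fin q)).map .inl

def block (q N : ℕ) (i : Fin d) : Finset ((Fin d × Fin q) ⊕ Fin N) :=
  univ.map ((Function.Embedding.sectR i (Fin q)).trans .inl)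

lemma card_witness_le (x : Fin d → Bool) : #(witness q N x) ≤ d * q := by
  simpa [witness] using card_filter_le (univ : Finset (Fin d × Fin q)) _

lemma padded_eq_true {Φ : (Fin d → Bool) → Bool} {x : Fin d → Bool} (hx : Φ x = true)
    {f : (Fin d × Fin q) ⊕ Fin N → Bool} (hf : ∀ i, (∀ j, f (.inl (i, j)) = true) ↔ x i = true) :
    padded Φ f = true := by
  have : (fun i => decide (∀ j, f (.inl (i, j)) = true)) = x :=
    funext fun i => by rw [Bool.eq_iff_iff, decide_eq_true_iff, hf]
  rw [padded, this, hx, Bool.true_or]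

lemma subcube_witness_subset {Φ : (Fin d → Bool) → Bool} {x : Fin d → Bool} (hx : Φ x = true) :
    subcube (witness q N x) ⊆ {f ∈ subcube (witness q N x) | padded Φ f} ∪
      ({i | x i = false} : Finset (Fin d)).biUnion
        fun i => subcube (witness q N x ∪ block q N i) := by
  intro f hf
  by_contra h
  simp only [mem_union, mem_filter, hf, true_and, not_or, mem_biUnion, mem_univ, not_exists,
    not_and] at h
  refine h.1 (padded_eq_true hx fun i => ⟨fun hi => ?_, fun hi j => ?_⟩)
  · by_contra hxi
    refine h.2 i (by simpa using hxi) ?_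
    simp only [subcube, mem_filter, mem_univ, true_and, mem_union] at hf ⊢
    rintro c (hc | hc)
    · exact hf c hc
    · obtain ⟨j, -, rfl⟩ := mem_map.1 hc
      exact hi j
  · simp only [subcube, mem_filter, mem_univ, true_and] at hf
    exact hf _ (by simp [witness, hi])

lemma card_subcube_witness {x : Fin d → Bool} {i : Fin d} (hi : x i = false) :
    #(subcube (witness q N x)) = 2 ^ q * #(subcube (witness q N x ∪ block q N i)) := by
  have hdisj : Disjoint (witness q N x) (block q N i) := by
    simp only [witness, block, disjoint_left, mem_map]
    rintro _ ⟨⟨i', j⟩, hi', rfl⟩ ⟨j', -, h⟩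
    simp_all
  rw [card_subcube_of_subset subset_union_left, card_union_of_disjoint hdisj]
  simp [block]

lemma one_sub_le_relevance_padded {Φ : (Fin d → Bool) → Bool} {x : Fin d → Bool}
    (hx : Φ x = true) :
    1 - d * ((2 : ℝ) ^ q)⁻¹ ≤ relevance (padded Φ) (witness q N x) := by
  set T : Finset ((Fin d × Fin q) ⊕ Fin N) := witness q N x
  set F : Finset (Fin d) := {i | x i = false}
  set B := F.biUnion fun i => subcube (T ∪ block q N i)
  have hB : 2 ^ q * #B ≤ d * #(subcube T) :=
    calc 2 ^ q * #B ≤ 2 ^ q * ∑ i ∈ F, #(subcube (T ∪ block q N i)) := by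
          gcongr; exact card_biUnion_le
      _ = ∑ i ∈ F, #(subcube T) := by
          rw [mul_sum]
          exact sum_congr rfl fun i hi => (card_subcube_witness (by simpa [F] using hi)).symm
      _ = #F * #(subcube T) := by rw [sum_const, smul_eq_mul]
      _ ≤ d * #(subcube T) := by gcongr; simpa using card_le_univ F
  have hB' : (#B : ℝ) ≤ ((2 : ℝ) ^ q)⁻¹ * (d * #(subcube T)) := by
    rw [le_inv_mul_iff₀ (by positivity)]; exact_mod_cast hB
  have hcover : (#(subcube T) : ℝ) ≤ #{f ∈ subcube T | padded Φ f} + #B := by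
    exact_mod_cast (card_le_card (subcube_witness_subset hx)).trans (card_union_le _ _)
  have hpos : (0 : ℝ) < #(subcube T) := by rw [card_subcube]; positivity
  rw [relevance, le_div_iff₀ hpos]
  linear_combination hcover + hB'

end Padded

def coordEquiv (d q N : ℕ) :
    (Fin d → Fin q → Bool) × (Fin N → Bool) ≃ ((Fin d × Fin q) ⊕ Fin N → Bool) :=
  ((Equiv.curry _ _ _).symm.prodCongr (Equiv.refl _)).trans
    (Equiv.sumArrowEquivProdArrow _ _ _).symm

theorem sat_iff_relevant_set_general (δ : ℝ)
    (d q p m' : ℕ)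
    (hgap : (d : ℝ) * ((2 : ℝ) ^ q)⁻¹ ≤ 1 - δ)
    (hpδ : ((2 : ℝ) ^ p)⁻¹ < δ)
    (hm'dq : d * q ≤ m')
    (N : ℕ) (hN : N = m' + p)
    (Φ : (Fin d → Bool) → Bool) :
    let Φ' : (Fin d → Fin q → Bool) × (Fin N → Bool) → Bool := fun w =>
      Φ (fun i => decide (∀ j : Fin q, w.1 i j = true)) || decide (∀ i : Fin N, w.2 i = true)
    let coord : (Fin d → Fin q → Bool) × (Fin N → Bool) → (Fin d × Fin q) ⊕ Fin N → Bool :=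
      fun w => Sum.elim (fun c => w.1 c.1 c.2) w.2
    -- `T` is `δ`-relevant for `Φ'` and the all-ones input `x'` (note `Φ'(x') = 1`)
    let relevant : Finset ((Fin d × Fin q) ⊕ Fin N) → Prop := fun T =>
      δ ≤ ((Finset.univ.filter
              (fun w : (Fin d → Fin q → Bool) × (Fin N → Bool) =>
                Φ' w = true ∧ ∀ c ∈ T, coord w c = true)).card : ℝ) /
          ((Finset.univ.filter
              (fun w : (Fin d → Fin q → Bool) × (Fin N → Bool) =>
                ∀ c ∈ T, coord w c = true)).card : ℝ)
    ((∃ x : Fin d → Bool, Φ x = true) ↔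
      ∃ T : Finset ((Fin d × Fin q) ⊕ Fin N), T.card ≤ d * q ∧ relevant T)
    ∧ ((∀ z : Fin d → Bool, Φ z = false) →
        ∀ T : Finset ((Fin d × Fin q) ⊕ Fin N), T.card ≤ m' → ¬ relevant T) := by
  intro Φ' coord relevant
  have relevant_iff T : relevant T ↔ δ ≤ relevance (padded Φ) T := by
    rw [relevance_eq_of_equiv (coordEquiv d q N)]
    rfl
  have unsat (hΦ : ∀ z, Φ z = false) T (hT : #T ≤ m') : ¬ relevant T := by
    have hle := relevance_padded_le_of_unsat hΦ hT
    rw [show N - m' = p by omega] at hle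
    rw [relevant_iff, not_le]
    exact hle.trans_lt hpδ
  refine ⟨⟨?_, ?_⟩, unsat⟩
  · rintro ⟨x, hx⟩
    refine ⟨witness q N x, card_witness_le x, (relevant_iff _).2 ?_⟩
    exact (le_sub_comm.1 hgap).trans (one_sub_le_relevance_padded hx)
  · rintro ⟨T, hT, hrel⟩
    by_contra hsat
    exact unsat (by simpa using hsat) T (hT.trans hm'dq) hrel

/-- Let `δ ∈ (0,1)` and let `q, p, m'` be positive integers with
`d·2^{−q} ≤ 1 − δ`, `2^{−p} < δ`, `m' ≥ dq`.  With `N = m' + p`,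
`Φ'(U, v) = Φ(⋀ⱼ u⁽ʲ⁾) ∨ (⋀ᵢ vᵢ)`, and `x'` the all-ones input:
`Φ` is satisfiable iff there is a subset `T` of the `dq + N` coordinates with
`|T| ≤ dq` that is `δ`-relevant for `Φ'` and `x'`; moreover if `Φ` is unsatisfiable
then no subset `T` with `|T| ≤ m'` is `δ`-relevant for `Φ'` and `x'`.
(`δ`-relevance of `T`: `P(Φ'(y) = Φ'(x') | y_T = x'_T) ≥ δ` for uniform `y`; here
`Φ'(x') = 1`.) -/
theorem sat_iff_relevant_set (δ : ℝ) (hδ0 : 0 < δ) (hδ1 : δ < 1)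
    (d q p m' : ℕ) (hd : 0 < d) (hq : 0 < q) (hp : 0 < p) (hm' : 0 < m')
    (hgap : (d : ℝ) * ((2 : ℝ) ^ q)⁻¹ ≤ 1 - δ)
    (hpδ : ((2 : ℝ) ^ p)⁻¹ < δ)
    (hm'dq : d * q ≤ m')
    (N : ℕ) (hN : N = m' + p)
    (Φ : (Fin d → Bool) → Bool) :
    let Φ' : (Fin d → Fin q → Bool) × (Fin N → Bool) → Bool := fun w =>
      Φ (fun i => decide (∀ j : Fin q, w.1 i j = true)) || decide (∀ i : Fin N, w.2 i = true)
    let coord : (Fin d → Fin q → Bool) × (Fin N → Bool) → (Fin d × Fin q) ⊕ Fin N → Bool :=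
      fun w => Sum.elim (fun c => w.1 c.1 c.2) w.2
    -- `T` is `δ`-relevant for `Φ'` and the all-ones input `x'` (note `Φ'(x') = 1`)
    let relevant : Finset ((Fin d × Fin q) ⊕ Fin N) → Prop := fun T =>
      δ ≤ ((Finset.univ.filter
              (fun w : (Fin d → Fin q → Bool) × (Fin N → Bool) =>
                Φ' w = true ∧ ∀ c ∈ T, coord w c = true)).card : ℝ) /
          ((Finset.univ.filter
              (fun w : (Fin d → Fin q → Bool) × (Fin N → Bool) =>
                ∀ c ∈ T, coord w c = true)).card : ℝ)
    ((∃ x : Fin d → Bool, Φ x = true) ↔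
      ∃ T : Finset ((Fin d × Fin q) ⊕ Fin N), T.card ≤ d * q ∧ relevant T)
    ∧ ((∀ z : Fin d → Bool, Φ z = false) →
        ∀ T : Finset ((Fin d × Fin q) ⊕ Fin N), T.card ≤ m' → ¬ relevant T) :=
  sat_iff_relevant_set_general δ d q p m' hgap hpδ hm'dq N hN Φ
end

section
/- Let α ∈ (0,1) and let k, p, m be real numbers with k ≥ 1, p ≥ 1, m ≥ 2k·(k^{1−α} + p^{1−α}), and m > (2k)^{1/α}. Then k·(k + m + p)^{1−α} < m. -/
/-! Subadditivity of `z ↦ z ^ (1 - α)` splits `k (k + m + p) ^ (1 - α)` into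
`k (k ^ (1 - α) + p ^ (1 - α))`, at most `m / 2` by the first bound on `m`, and `k m ^ (1 - α)`,
which is below `m / 2` because the second bound on `m` says exactly `2 k < m ^ α`. -/

namespace Real

lemma lt_rpow_of_rpow_inv_lt {c m α : ℝ} (hc : 0 ≤ c) (hα : 0 < α) (h : c ^ α⁻¹ < m) :
    c < m ^ α :=
  (rpow_inv_lt_iff_of_pos hc ((rpow_nonneg hc _).trans h.le) hα).1 h

lemma mul_rpow_one_sub_lt {c m α : ℝ} (hα : α ≠ 1) (hm : 0 < m) (h : c < m ^ α) :
    c * m ^ (1 - α) < m := by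
  rw [rpow_one_sub' hm.le (sub_ne_zero.2 hα.symm), mul_div_assoc',
    div_lt_iff₀ (rpow_pos_of_pos hm α)]
  exact mul_lt_mul_of_pos_right h hm |>.trans_eq (mul_comm _ _)

end Real

/-- For `α ∈ (0,1)` and reals `k, p ≥ 1`, `m ≥ 2k·(k^{1−α} + p^{1−α})`,
`m > (2k)^{1/α}`, one has `k·(k + m + p)^{1−α} < m`. -/
theorem key_inequality (α : ℝ) (hα0 : 0 < α) (hα1 : α < 1)
    (k p m : ℝ) (hk : 1 ≤ k) (hp : 1 ≤ p)
    (hm1 : 2 * k * (k ^ (1 - α) + p ^ (1 - α)) ≤ m)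
    (hm2 : (2 * k) ^ (1 / α) < m) :
    k * (k + m + p) ^ (1 - α) < m := by
  have hk0 : 0 ≤ k := by linarith
  have hp0 : 0 ≤ p := by linarith
  have h2k : 0 ≤ 2 * k := by linarith
  have hq0 : 0 ≤ 1 - α := by linarith
  have hq1 : 1 - α ≤ 1 := by linarith
  rw [one_div] at hm2
  have hm0 : 0 < m := (Real.rpow_nonneg h2k _).trans_lt hm2
  have hsmall : 2 * k * m ^ (1 - α) < m :=
    Real.mul_rpow_one_sub_lt hα1.ne hm0 (Real.lt_rpow_of_rpow_inv_lt h2k hα0 hm2)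
  calc k * (k + m + p) ^ (1 - α)
      ≤ k * ((k + p) ^ (1 - α) + m ^ (1 - α)) := by
        rw [add_right_comm]; gcongr; exact Real.rpow_add_le_add_rpow (add_nonneg hk0 hp0) hm0.le hq0 hq1
    _ ≤ k * (k ^ (1 - α) + p ^ (1 - α) + m ^ (1 - α)) := by
        gcongr; exact Real.rpow_add_le_add_rpow hk0 hp0 hq0 hq1
    _ < m := by linarith
end

section
/- Let μ ∈ ℝ and σ > 0, and let z be a real random variable with the Gaussian distribution of mean μ and variance σ². Then Var[max(z, 0)] = μ·σ·f(η) + (σ² + μ²)·F(η) − (σ·f(η) + μ·F(η))², where η = μ/σ, f(t) = (2π)^{−1/2}·exp(−t²/2) is the standard normal probability density function and F(t) = ∫_{−∞}^{t} f(s) ds is the standard normal cumulative distribution function. -/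
/-!
Write `z = σ t + μ` with `t` standard normal. Then `max z 0` vanishes exactly when `t ≤ -η`, so
both moments of `max z 0` are integrals of polynomials in `t` against the standard density `φ`
over `(-η, ∞)`. Since `φ' = -t φ`, integration by parts gives the truncated moments
`∫_a^∞ t φ = φ a` and `∫_a^∞ t² φ = a φ a + ∫_a^∞ φ`, and `∫_a^∞ φ = F (-a)` by symmetry of `φ`.
-/

open MeasureTheory Real
open Set Filter ProbabilityTheory

local notation "φ" => gaussianPDFReal 0 1

lemma gaussianPDFReal_zero_one (t : ℝ) :
    φ t = (√(2 * π))⁻¹ * exp (-t ^ 2 / 2) := by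
  simp [gaussianPDFReal]

lemma gaussianPDFReal_zero_one_neg (t : ℝ) : φ (-t) = φ t := by
  simp [gaussianPDFReal_zero_one]

lemma hasDerivAt_gaussianPDFReal_zero_one (t : ℝ) : HasDerivAt φ (-(t * φ t)) t := by
  have hexp : HasDerivAt (fun t : ℝ => -t ^ 2 / 2) (-t) t :=
    ((hasDerivAt_pow 2 t).fun_neg.div_const 2).congr_deriv (by ring)
  rw [show φ = fun t => (√(2 * π))⁻¹ * exp (-t ^ 2 / 2) from funext gaussianPDFReal_zero_one]
  exact (hexp.exp.const_mul _).congr_deriv (by ring)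

lemma integrable_pow_mul_gaussianPDFReal_zero_one (n : ℕ) :
    Integrable fun t : ℝ => t ^ n * φ t := by
  have h := integrable_rpow_mul_exp_neg_mul_sq (b := 2⁻¹) (by norm_num) (s := n)
    (by linarith [n.cast_nonneg (α := ℝ)])
  refine (h.const_mul (√(2 * π))⁻¹).congr (ae_of_all _ fun t => ?_)
  simp only [rpow_natCast, gaussianPDFReal_zero_one]
  ring_nf

lemma integrable_mul_gaussianPDFReal_zero_one : Integrable fun t : ℝ => t * φ t := by
  simpa using integrable_pow_mul_gaussianPDFReal_zero_one 1

lemma integral_Ioi_mul_gaussianPDFReal_zero_one (a : ℝ) :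
    ∫ t in Ioi a, t * φ t = φ a := by
  have hderiv (t : ℝ) : HasDerivAt (fun t => -φ t) (t * φ t) t := by
    simpa using (hasDerivAt_gaussianPDFReal_zero_one t).fun_neg
  have hlim : Tendsto (fun t => -φ t) atTop (nhds 0) :=
    tendsto_zero_of_hasDerivAt_of_integrableOn_Ioi (a := a) (fun t _ => hderiv t)
      integrable_mul_gaussianPDFReal_zero_one.integrableOn
      (integrable_gaussianPDFReal 0 1).neg.integrableOn
  simpa using integral_Ioi_of_hasDerivAt_of_tendsto' (fun t _ => hderiv t)
    integrable_mul_gaussianPDFReal_zero_one.integrableOn hlim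

lemma integral_Ioi_sq_mul_gaussianPDFReal_zero_one (a : ℝ) :
    ∫ t in Ioi a, t ^ 2 * φ t = a * φ a + ∫ t in Ioi a, φ t := by
  have hderiv (t : ℝ) : HasDerivAt (fun t => -(t * φ t)) (t ^ 2 * φ t - φ t) t :=
    ((hasDerivAt_id' t).mul (hasDerivAt_gaussianPDFReal_zero_one t)).fun_neg.congr_deriv
      (by ring)
  have hint : IntegrableOn (fun t => t ^ 2 * φ t - φ t) (Ioi a) :=
    ((integrable_pow_mul_gaussianPDFReal_zero_one 2).sub
      (integrable_gaussianPDFReal 0 1)).integrableOn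
  have hlim : Tendsto (fun t => -(t * φ t)) atTop (nhds 0) :=
    tendsto_zero_of_hasDerivAt_of_integrableOn_Ioi (a := a) (fun t _ => hderiv t) hint
      integrable_mul_gaussianPDFReal_zero_one.neg.integrableOn
  have h := integral_Ioi_of_hasDerivAt_of_tendsto' (fun t _ => hderiv t) hint hlim
  rw [integral_sub (integrable_pow_mul_gaussianPDFReal_zero_one 2).integrableOn
    (integrable_gaussianPDFReal 0 1).integrableOn] at h
  linarith

lemma integral_Ioi_gaussianPDFReal_zero_one (a : ℝ) :
    ∫ t in Ioi a, φ t = ∫ t in Iic (-a), φ t := by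
  rw [← integral_comp_neg_Ioi]
  exact setIntegral_congr_fun measurableSet_Ioi fun t _ => (gaussianPDFReal_zero_one_neg t).symm

lemma gaussianReal_eq_map_affine (μ σ : ℝ) :
    gaussianReal μ ⟨σ ^ 2, sq_nonneg σ⟩ = (gaussianReal 0 1).map (fun t => σ * t + μ) := by
  have hscale : (gaussianReal 0 1).map (σ * ·) = gaussianReal 0 ⟨σ ^ 2, sq_nonneg σ⟩ := by
    have h := gaussianReal_map_const_mul (μ := 0) (v := 1) σ
    simp only [mul_zero, mul_one] at h
    exact h
  have hshift : (gaussianReal 0 ⟨σ ^ 2, sq_nonneg σ⟩).map (· + μ) =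
      gaussianReal μ ⟨σ ^ 2, sq_nonneg σ⟩ := by
    simpa using gaussianReal_map_add_const (μ := 0) (v := ⟨σ ^ 2, sq_nonneg σ⟩) μ
  rw [← hshift, ← hscale, Measure.map_map (by fun_prop) (by fun_prop)]
  rfl

lemma integral_gaussianReal_eq_integral_gaussianPDFReal_zero_one (μ σ : ℝ) {g : ℝ → ℝ}
    (hg : Measurable g) :
    ∫ x, g x ∂gaussianReal μ ⟨σ ^ 2, sq_nonneg σ⟩ = ∫ t, φ t * g (σ * t + μ) := by
  rw [gaussianReal_eq_map_affine, integral_map (by fun_prop) hg.aestronglyMeasurable,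
    integral_gaussianReal_eq_integral_smul one_ne_zero]
  rfl

lemma memLp_two_max_zero_gaussianReal (μ : ℝ) (v : NNReal) :
    MemLp (fun z : ℝ => max z 0) 2 (gaussianReal μ v) :=
  (memLp_id_gaussianReal' 2 (by simp)).mono (by fun_prop) <| ae_of_all _ fun z => by
    rw [norm_of_nonneg (le_max_right z 0)]
    exact max_le (le_norm_self z) (norm_nonneg z)

lemma variance_max_zero_gaussianReal (μ : ℝ) (v : NNReal) :
    Var[fun z => max z 0; gaussianReal μ v] =
      ∫ z, max z 0 ^ 2 ∂gaussianReal μ v - (∫ z, max z 0 ∂gaussianReal μ v) ^ 2 :=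
  variance_eq_sub (memLp_two_max_zero_gaussianReal μ v)

section Relu

variable {μ σ : ℝ}

lemma max_affine_zero_pow_eq_indicator (hσ : 0 < σ) {k : ℕ} (hk : k ≠ 0) (t : ℝ) :
    max (σ * t + μ) 0 ^ k = (Ioi (-(μ / σ))).indicator (fun t => (σ * t + μ) ^ k) t := by
  have hpos : t ∈ Ioi (-(μ / σ)) ↔ 0 < σ * t + μ := by
    rw [mem_Ioi, neg_div', div_lt_iff₀ hσ]
    constructor <;> intro h <;> linarith
  by_cases ht : t ∈ Ioi (-(μ / σ))
  · rw [indicator_of_mem ht, max_eq_left (hpos.mp ht).le]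
  · rw [indicator_of_notMem ht, max_eq_right (not_lt.mp (hpos.not.mp ht)), zero_pow hk]

lemma integral_gaussianPDFReal_mul_max_affine_zero_pow (hσ : 0 < σ) {k : ℕ} (hk : k ≠ 0) :
    ∫ t, φ t * max (σ * t + μ) 0 ^ k = ∫ t in Ioi (-(μ / σ)), φ t * (σ * t + μ) ^ k := by
  simp_rw [max_affine_zero_pow_eq_indicator hσ hk, ← indicator_mul_right]
  exact integral_indicator measurableSet_Ioi

lemma integral_gaussianPDFReal_mul_max_affine_zero (hσ : 0 < σ) :
    ∫ t, φ t * max (σ * t + μ) 0 = σ * φ (μ / σ) + μ * ∫ s in Iic (μ / σ), φ s := by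
  have h0 := (integrable_gaussianPDFReal 0 1).integrableOn (s := Ioi (-(μ / σ)))
  have h1 := integrable_mul_gaussianPDFReal_zero_one.integrableOn (s := Ioi (-(μ / σ)))
  have hmoment := integral_gaussianPDFReal_mul_max_affine_zero_pow (μ := μ) hσ one_ne_zero
  simp only [pow_one] at hmoment
  calc ∫ t, φ t * max (σ * t + μ) 0
      = ∫ t in Ioi (-(μ / σ)), σ * (t * φ t) + μ * φ t := by
        rw [hmoment]
        congr 1 with t
        ring
    _ = σ * (∫ t in Ioi (-(μ / σ)), t * φ t) + μ * ∫ t in Ioi (-(μ / σ)), φ t := by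
        rw [integral_add (h1.const_mul σ) (h0.const_mul μ), integral_const_mul, integral_const_mul]
    _ = σ * φ (μ / σ) + μ * ∫ s in Iic (μ / σ), φ s := by
        rw [integral_Ioi_mul_gaussianPDFReal_zero_one, integral_Ioi_gaussianPDFReal_zero_one,
          gaussianPDFReal_zero_one_neg, neg_neg]

lemma integral_gaussianPDFReal_mul_max_affine_zero_sq (hσ : 0 < σ) :
    ∫ t, φ t * max (σ * t + μ) 0 ^ 2 =
      μ * σ * φ (μ / σ) + (σ ^ 2 + μ ^ 2) * ∫ s in Iic (μ / σ), φ s := by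
  have h0 := (integrable_gaussianPDFReal 0 1).integrableOn (s := Ioi (-(μ / σ)))
  have h1 := integrable_mul_gaussianPDFReal_zero_one.integrableOn (s := Ioi (-(μ / σ)))
  have h2 := (integrable_pow_mul_gaussianPDFReal_zero_one 2).integrableOn (s := Ioi (-(μ / σ)))
  calc ∫ t, φ t * max (σ * t + μ) 0 ^ 2
      = ∫ t in Ioi (-(μ / σ)), σ ^ 2 * (t ^ 2 * φ t) + 2 * σ * μ * (t * φ t) + μ ^ 2 * φ t := by
        rw [integral_gaussianPDFReal_mul_max_affine_zero_pow hσ two_ne_zero]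
        congr 1 with t
        ring
    _ = σ ^ 2 * (∫ t in Ioi (-(μ / σ)), t ^ 2 * φ t)
          + 2 * σ * μ * (∫ t in Ioi (-(μ / σ)), t * φ t) + μ ^ 2 * ∫ t in Ioi (-(μ / σ)), φ t := by
        rw [integral_add ((h2.const_mul _).fun_add (h1.const_mul _)) (h0.const_mul _),
          integral_add (h2.const_mul _) (h1.const_mul _), integral_const_mul, integral_const_mul,
          integral_const_mul]
    _ = μ * σ * φ (μ / σ) + (σ ^ 2 + μ ^ 2) * ∫ s in Iic (μ / σ), φ s := by
        rw [integral_Ioi_sq_mul_gaussianPDFReal_zero_one, integral_Ioi_mul_gaussianPDFReal_zero_one,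
          integral_Ioi_gaussianPDFReal_zero_one, gaussianPDFReal_zero_one_neg, neg_neg]
        field_simp
        ring

end Relu

/-- For a Gaussian random variable `z` with mean `μ` and variance `σ²`
(`σ > 0`), with `η = μ/σ`,
`Var[max(z,0)] = μ·σ·f(η) + (σ² + μ²)·F(η) − (σ·f(η) + μ·F(η))²`, where `f` is the
standard normal density and `F` the standard normal cumulative distribution function. -/
theorem gaussian_relu_variance (μ σ : ℝ) (hσ : 0 < σ) :
    let f : ℝ → ℝ := fun t => (Real.sqrt (2 * π))⁻¹ * Real.exp (-t ^ 2 / 2)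
    let F : ℝ → ℝ := fun t => ∫ s in Set.Iic t, f s
    let η : ℝ := μ / σ
    ProbabilityTheory.variance (fun z => max z 0)
        (ProbabilityTheory.gaussianReal μ ⟨σ ^ 2, sq_nonneg σ⟩) =
      μ * σ * f η + (σ ^ 2 + μ ^ 2) * F η - (σ * f η + μ * F η) ^ 2 := by
  intro f F η
  have hf : f = φ := funext fun t => (gaussianPDFReal_zero_one t).symm
  simp only [F, η, hf]
  -- `v` is passed explicitly: instance search does not see through the literal `⟨σ ^ 2, _⟩`
  rw [variance_max_zero_gaussianReal μ ⟨σ ^ 2, sq_nonneg σ⟩,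
    integral_gaussianReal_eq_integral_gaussianPDFReal_zero_one μ σ (by fun_prop),
    integral_gaussianReal_eq_integral_gaussianPDFReal_zero_one μ σ (by fun_prop),
    integral_gaussianPDFReal_mul_max_affine_zero_sq hσ,
    integral_gaussianPDFReal_mul_max_affine_zero hσ]
end
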